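/- arXiv:2105.07457 — 2 statements merged into one kernel-verified Lean document; each statement's English description precedes it below -/
import Mathlib

section
/- Every compact regular frame is strongly regular: if L is a compact regular frame, then every a ∈ L satisfies a = sSup {b | b ≺₀ a}, where ≺₀ is the greatest interpolative relation contained in the well-inside relation ≺ of L. -/
/-- The well-inside relation of a frame: `b` is well inside `a` iff `bᶜ ⊔ a = ⊤`. -/
def WellInside {L : Type*} [Order.Frame L] (b a : L) : Prop := bᶜ ⊔ a = ⊤

/-- A frame is regular if every element is the join of the elements well inside it. -/
def IsRegularFrame (L : Type*) [Order.Frame L] : Prop :=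
  ∀ a : L, a = sSup {b | WellInside b a}

/-- A frame is compact if `⊤` is a compact element. -/
def IsCompactFrame (L : Type*) [Order.Frame L] : Prop :=
  ∀ S : Set L, ⊤ ≤ sSup S → ∃ T : Set L, T ⊆ S ∧ T.Finite ∧ ⊤ ≤ sSup T

/-- A binary relation `r` is interpolative if `r x y` implies there is `z`
with `r x z` and `r z y`. -/
def Interpolative {A : Type*} (r : A → A → Prop) : Prop :=
  ∀ x y, r x y → ∃ z, r x z ∧ r z y

/-- The greatest interpolative relation contained in `r`: the union of all
interpolative relations contained in `r`. -/
def gis {A : Type*} (r : A → A → Prop) : A → A → Prop :=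
  fun x y => ∃ s : A → A → Prop,
    (∀ a b, s a b → r a b) ∧ Interpolative s ∧ s x y

/-
In a compact regular frame the well-inside relation `≺` already interpolates, so `≺₀ = ≺` and
strong regularity is regularity. Given `b ≺ a`, regularity gives `⊤ = bᶜ ⊔ ⨆ {c | c ≺ a}`;
compactness extracts finitely many `c ≺ a` whose join `c` still satisfies `bᶜ ⊔ c = ⊤`,
i.e. `b ≺ c`, and `c ≺ a` because `≺ a` is closed under finite joins.
-/

theorem gis_eq_self_of_interpolative {A : Type*} {r : A → A → Prop} (hr : Interpolative r) :
    gis r = r := by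
  ext x y
  exact ⟨fun ⟨_, hsr, _, hs⟩ => hsr x y hs, fun h => ⟨r, fun _ _ => id, hr, h⟩⟩

section WellInside

variable {L : Type*} [Order.Frame L]

theorem wellInside_bot (a : L) : WellInside ⊥ a := by
  simp [WellInside]

theorem WellInside.sup {b c a : L} (hb : WellInside b a) (hc : WellInside c a) :
    WellInside (b ⊔ c) a := by
  unfold WellInside at *
  rw [compl_sup, sup_inf_right, hb, hc, inf_top_eq]

theorem wellInside_sSup_of_finite {T : Set L} (hT : T.Finite) {a : L}
    (h : ∀ t ∈ T, WellInside t a) : WellInside (sSup T) a := by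
  rw [← hT.coe_toFinset, ← Finset.sup_id_eq_sSup]
  exact Finset.sup_induction (p := (WellInside · a)) (wellInside_bot a)
    (fun _ hb _ hc => hb.sup hc) fun t ht => h t (hT.mem_toFinset.mp ht)

theorem interpolative_wellInside (hc : IsCompactFrame L) (hr : IsRegularFrame L) :
    Interpolative (WellInside (L := L)) := by
  intro b a hba
  have htop : ⊤ ≤ sSup (insert bᶜ {c | WellInside c a}) := by
    rw [sSup_insert, ← hr a]
    exact hba.ge
  obtain ⟨T, hTS, hTfin, hTtop⟩ := hc _ htop
  refine ⟨sSup (T \ {bᶜ}), ?_, ?_⟩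
  · refine top_le_iff.mp (hTtop.trans ?_)
    calc sSup T ≤ sSup (insert bᶜ (T \ {bᶜ})) :=
          sSup_le_sSup (Set.subset_insert_sdiff_singleton _ _)
      _ = bᶜ ⊔ sSup (T \ {bᶜ}) := sSup_insert
  · refine wellInside_sSup_of_finite (hTfin.subset Set.sdiff_subset) fun t ⟨ht, hne⟩ => ?_
    exact (hTS ht).resolve_left hne

end WellInside

/-- Every compact regular frame is strongly regular: every element is the join
of the elements `b` with `b ≺₀ a`, where `≺₀` is the greatest interpolative
relation contained in the well-inside relation. -/
theorem compact_regular_stronglyRegular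
    {L : Type*} [Order.Frame L] (hc : IsCompactFrame L) (hr : IsRegularFrame L) :
    ∀ a : L, a = sSup {b | gis WellInside b a} := by
  rw [gis_eq_self_of_interpolative (interpolative_wellInside hc hr)]
  exact hr
end

section
/- Let L be a strongly regular frame, ι an index type, (Lᵢ)_{i ∈ ι} a family of compact regular frames, and fᵢ : Lᵢ → L frame homomorphisms. Then there exist a compact regular frame M and a dense surjective frame homomorphism k : M → L such that for every i ∈ ι there is a unique frame homomorphism gᵢ : Lᵢ → M with fᵢ = k ∘ gᵢ. -/
local notation:50 a:51 " ≺ " b:51 => WellInside a b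
local notation:50 a:51 " ≺₀ " b:51 => gis WellInside a b

section Gis

variable {A B : Type*} {r : A → A → Prop}

theorem gis_le {x y : A} (h : gis r x y) : r x y :=
  h.elim fun _ ⟨hsr, _, hxy⟩ => hsr x y hxy

theorem interpolative_gis : Interpolative (gis r) := by
  rintro x y ⟨s, hsr, hs, hxy⟩
  obtain ⟨z, hxz, hzy⟩ := hs x y hxy
  exact ⟨z, ⟨s, hsr, hs, hxz⟩, ⟨s, hsr, hs, hzy⟩⟩

theorem gis_map {r' : B → B → Prop} {f : A → B} (hr : Interpolative r)
    (hf : ∀ a b, r a b → r' (f a) (f b)) {a b : A} (h : r a b) : gis r' (f a) (f b) := by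
  refine ⟨fun x y => ∃ a b, r a b ∧ x = f a ∧ y = f b, ?_, ?_, a, b, h, rfl, rfl⟩
  · rintro _ _ ⟨a, b, hab, rfl, rfl⟩
    exact hf a b hab
  · rintro _ _ ⟨a, b, hab, rfl, rfl⟩
    obtain ⟨c, hac, hcb⟩ := hr a b hab
    exact ⟨f c, ⟨a, c, hac, rfl, rfl⟩, ⟨c, b, hcb, rfl, rfl⟩⟩

end Gis

section WellInside

variable {L K : Type*} [Order.Frame L] [Order.Frame K] {a b c d : L}

theorem WellInside.le (h : b ≺ a) : b ≤ a :=
  disjoint_compl_right.le_of_codisjoint (codisjoint_iff.mpr h)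

theorem WellInside.mono (hdb : d ≤ b) (h : b ≺ a) (hac : a ≤ c) : d ≺ c :=
  top_le_iff.mp (h ▸ sup_le_sup (compl_anti hdb) hac)

theorem wellInside_bot_left (a : L) : ⊥ ≺ a := by simp [WellInside]

theorem wellInside_top_right (a : L) : a ≺ ⊤ := by simp [WellInside]

theorem WellInside.sup_left (hb : b ≺ a) (hc : c ≺ a) : b ⊔ c ≺ a := by
  unfold WellInside at *
  rw [compl_sup, sup_comm, sup_inf_left, sup_comm a, sup_comm a, hb, hc, inf_top_eq]

theorem WellInside.inf_right (hb : a ≺ b) (hc : a ≺ c) : a ≺ b ⊓ c := by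
  unfold WellInside at *
  rw [sup_inf_left, hb, hc, inf_top_eq]

theorem WellInside.finset_sup_left {T : Finset L} (h : ∀ b ∈ T, b ≺ a) : T.sup id ≺ a :=
  Finset.sup_induction (p := (· ≺ a)) (wellInside_bot_left a) (fun _ hb _ hc => hb.sup_left hc) h

theorem WellInside.compl (h : b ≺ a) : aᶜ ≺ bᶜ :=
  top_le_iff.mp <| h ▸ (sup_comm aᶜᶜ bᶜ).ge.trans' (sup_le_sup_left le_compl_compl _)

theorem FrameHom.map_compl_le (f : FrameHom K L) (x : K) : f xᶜ ≤ (f x)ᶜ :=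
  le_compl_iff_disjoint_right.mpr <| disjoint_iff.mpr <| by
    rw [← map_inf, inf_comm, inf_compl_self, map_bot]

theorem WellInside.map (f : FrameHom K L) {z x : K} (h : z ≺ x) : f z ≺ f x :=
  top_le_iff.mp <| calc
    ⊤ = f (zᶜ ⊔ x) := by rw [show zᶜ ⊔ x = ⊤ from h, map_top]
    _ ≤ (f z)ᶜ ⊔ f x := (map_sup f _ _).trans_le (sup_le_sup_right (f.map_compl_le z) _)

theorem WellInside.exists_finset_of_sSup (hK : IsCompactFrame K) {z : K} {U : Set K}
    (h : z ≺ sSup U) : ∃ T : Finset K, ↑T ⊆ U ∧ z ≺ T.sup id := by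
  obtain ⟨T, hTU, hT, htop⟩ := hK (insert zᶜ U) (by rw [sSup_insert]; exact h.ge)
  refine ⟨(hT.inter_of_left U).toFinset, by simp, top_le_iff.mp (htop.trans ?_)⟩
  rw [Finset.sup_id_eq_sSup, Set.Finite.coe_toFinset, ← sSup_insert]
  exact sSup_le_sSup fun t ht => (hTU ht).imp id fun htU => ⟨ht, htU⟩

theorem WellInside.exists_between (hK : IsCompactFrame K) (hK' : IsRegularFrame K) {z x : K}
    (h : z ≺ x) : ∃ w, z ≺ w ∧ w ≺ x := by
  rw [hK' x] at h
  obtain ⟨T, hTx, hzT⟩ := h.exists_finset_of_sSup hK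
  exact ⟨T.sup id, hzT, WellInside.finset_sup_left fun w hw => hTx hw⟩

theorem WellInside.map_gis (hK : IsCompactFrame K) (hK' : IsRegularFrame K)
    (f : FrameHom K L) {z x : K} (h : z ≺ x) : f z ≺₀ f x :=
  gis_map (fun _ _ h => h.exists_between hK hK') (fun _ _ h => h.map f) h

end WellInside

section GisWellInside

variable {L : Type*} [Order.Frame L] {a b c d : L}

theorem gis_wellInside_mono (hdb : d ≤ b) (h : b ≺₀ a) (hac : a ≤ c) : d ≺₀ c := by
  refine ⟨fun x y => ∃ x' y', x ≤ x' ∧ x' ≺₀ y' ∧ y' ≤ y, ?_, ?_, b, a, hdb, h, hac⟩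
  · rintro x y ⟨x', y', hx, h, hy⟩
    exact (gis_le h).mono hx hy
  · rintro x y ⟨x', y', hx, h, hy⟩
    obtain ⟨z, hxz, hzy⟩ := interpolative_gis x' y' h
    exact ⟨z, ⟨x', z, hx, hxz, le_rfl⟩, ⟨z, y', le_rfl, hzy, hy⟩⟩

theorem gis_wellInside_bot_left (a : L) : ⊥ ≺₀ a := by
  refine ⟨fun x _ => x = ⊥, ?_, fun _ _ hx => ⟨⊥, hx, rfl⟩, rfl⟩
  rintro _ y rfl
  exact wellInside_bot_left y

theorem gis_wellInside_top_right (a : L) : a ≺₀ ⊤ := by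
  refine ⟨fun _ y => y = ⊤, ?_, fun _ _ hy => ⟨⊤, rfl, hy⟩, rfl⟩
  rintro x _ rfl
  exact wellInside_top_right x

theorem gis_wellInside_sup_left (hb : b ≺₀ a) (hc : c ≺₀ a) : b ⊔ c ≺₀ a := by
  refine ⟨fun x y => ∃ x₁ x₂, x = x₁ ⊔ x₂ ∧ x₁ ≺₀ y ∧ x₂ ≺₀ y, ?_, ?_, b, c, rfl, hb, hc⟩
  · rintro _ y ⟨x₁, x₂, rfl, h₁, h₂⟩
    exact (gis_le h₁).sup_left (gis_le h₂)
  · rintro _ y ⟨x₁, x₂, rfl, h₁, h₂⟩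
    obtain ⟨z₁, hx₁, hz₁⟩ := interpolative_gis _ _ h₁
    obtain ⟨z₂, hx₂, hz₂⟩ := interpolative_gis _ _ h₂
    exact ⟨z₁ ⊔ z₂, ⟨x₁, x₂, rfl, gis_wellInside_mono le_rfl hx₁ le_sup_left,
      gis_wellInside_mono le_rfl hx₂ le_sup_right⟩, ⟨z₁, z₂, rfl, hz₁, hz₂⟩⟩

theorem gis_wellInside_inf_right (hb : a ≺₀ b) (hc : a ≺₀ c) : a ≺₀ b ⊓ c := by
  refine ⟨fun x y => ∃ y₁ y₂, y = y₁ ⊓ y₂ ∧ x ≺₀ y₁ ∧ x ≺₀ y₂, ?_, ?_, b, c, rfl, hb, hc⟩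
  · rintro x _ ⟨y₁, y₂, rfl, h₁, h₂⟩
    exact (gis_le h₁).inf_right (gis_le h₂)
  · rintro x _ ⟨y₁, y₂, rfl, h₁, h₂⟩
    obtain ⟨z₁, hz₁, hy₁⟩ := interpolative_gis _ _ h₁
    obtain ⟨z₂, hz₂, hy₂⟩ := interpolative_gis _ _ h₂
    exact ⟨z₁ ⊓ z₂, ⟨z₁, z₂, rfl, hz₁, hz₂⟩, ⟨y₁, y₂, rfl,
      gis_wellInside_mono inf_le_left hy₁ le_rfl, gis_wellInside_mono inf_le_right hy₂ le_rfl⟩⟩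

theorem gis_wellInside_compl (h : b ≺₀ a) : aᶜ ≺₀ bᶜ :=
  gis_map (r := fun x y => y ≺₀ x) (fun _ _ h => (interpolative_gis _ _ h).imp fun _ => And.symm)
    (fun _ _ h => (gis_le h).compl) h

end GisWellInside

structure RoundedIdeal (L : Type*) [Order.Frame L] where
  carrier : Set L
  bot_mem' : ⊥ ∈ carrier
  isLowerSet' : IsLowerSet carrier
  sup_mem' : ∀ ⦃a b⦄, a ∈ carrier → b ∈ carrier → a ⊔ b ∈ carrier
  exists_gis' : ∀ a ∈ carrier, ∃ b ∈ carrier, a ≺₀ b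

namespace RoundedIdeal

variable {L : Type*} [Order.Frame L] {I J : RoundedIdeal L} {a b : L}

instance : SetLike (RoundedIdeal L) L where
  coe := carrier
  coe_injective I J h := by cases I; cases J; congr

instance : PartialOrder (RoundedIdeal L) := .ofSetLike (RoundedIdeal L) L

theorem bot_mem (I : RoundedIdeal L) : ⊥ ∈ I := I.bot_mem'

theorem mem_of_le (hab : a ≤ b) (hb : b ∈ I) : a ∈ I := I.isLowerSet' hab hb

theorem sup_mem (ha : a ∈ I) (hb : b ∈ I) : a ⊔ b ∈ I := I.sup_mem' ha hb

theorem exists_gis (ha : a ∈ I) : ∃ b ∈ I, a ≺₀ b := I.exists_gis' a ha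

theorem finset_sup_mem {ι : Type*} {T : Finset ι} {f : ι → L} (h : ∀ i ∈ T, f i ∈ I) :
    T.sup f ∈ I :=
  Finset.sup_induction I.bot_mem (fun _ ha _ hb => sup_mem ha hb) h

theorem exists_finset_sup_gis {S : Set (RoundedIdeal L)} {T : Finset L}
    (hT : ∀ t ∈ T, ∃ I ∈ S, t ∈ I) :
    ∃ T' : Finset L, (∀ t ∈ T', ∃ I ∈ S, t ∈ I) ∧ T.sup id ≺₀ T'.sup id := by
  classical
  refine Finset.sup_induction
    (p := fun a => ∃ T' : Finset L, (∀ t ∈ T', ∃ I ∈ S, t ∈ I) ∧ a ≺₀ T'.sup id)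
    ⟨∅, by simp, gis_wellInside_bot_left _⟩ ?_ fun t ht => ?_
  · rintro a₁ ⟨T₁, hT₁, h₁⟩ a₂ ⟨T₂, hT₂, h₂⟩
    refine ⟨T₁ ∪ T₂, fun t ht => (Finset.mem_union.mp ht).elim (hT₁ t) (hT₂ t), ?_⟩
    rw [Finset.sup_union]
    exact gis_wellInside_sup_left (gis_wellInside_mono le_rfl h₁ le_sup_left)
      (gis_wellInside_mono le_rfl h₂ le_sup_right)
  · obtain ⟨I, hI, htI⟩ := hT t ht
    obtain ⟨b, hb, htb⟩ := exists_gis htI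
    exact ⟨{b}, by simpa using ⟨I, hI, hb⟩, by simpa using htb⟩

instance : SupSet (RoundedIdeal L) where
  sSup S :=
    { carrier := {a | ∃ T : Finset L, (∀ t ∈ T, ∃ I ∈ S, t ∈ I) ∧ a ≤ T.sup id}
      bot_mem' := ⟨∅, by simp⟩
      isLowerSet' := fun _ _ hab ⟨T, hT, hb⟩ => ⟨T, hT, hab.trans hb⟩
      sup_mem' := by
        classical
        rintro a b ⟨T₁, hT₁, ha⟩ ⟨T₂, hT₂, hb⟩
        refine ⟨T₁ ∪ T₂, fun t ht => (Finset.mem_union.mp ht).elim (hT₁ t) (hT₂ t), ?_⟩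
        rw [Finset.sup_union]
        exact sup_le_sup ha hb
      exists_gis' := by
        rintro a ⟨T, hT, ha⟩
        obtain ⟨T', hT', hTT'⟩ := exists_finset_sup_gis hT
        exact ⟨T'.sup id, ⟨T', hT', le_rfl⟩, gis_wellInside_mono ha hTT' le_rfl⟩ }

theorem mem_sSup {S : Set (RoundedIdeal L)} :
    a ∈ sSup S ↔ ∃ T : Finset L, (∀ t ∈ T, ∃ I ∈ S, t ∈ I) ∧ a ≤ T.sup id := Iff.rfl

theorem isLUB_sSup (S : Set (RoundedIdeal L)) : IsLUB S (sSup S) := by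
  refine ⟨fun I hI a ha => ⟨{a}, by simpa using ⟨I, hI, ha⟩, by simp⟩, fun J hJ a ha => ?_⟩
  obtain ⟨T, hT, haT⟩ := ha
  refine mem_of_le haT (finset_sup_mem fun t ht => ?_)
  obtain ⟨I, hI, htI⟩ := hT t ht
  exact hJ hI htI

instance : Min (RoundedIdeal L) where
  min I J :=
    { carrier := I ∩ J
      bot_mem' := ⟨I.bot_mem, J.bot_mem⟩
      isLowerSet' := I.isLowerSet'.inter J.isLowerSet'
      sup_mem' := fun _ _ ha hb => ⟨sup_mem ha.1 hb.1, sup_mem ha.2 hb.2⟩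
      exists_gis' := by
        rintro a ⟨haI, haJ⟩
        obtain ⟨b, hbI, hab⟩ := exists_gis haI
        obtain ⟨c, hcJ, hac⟩ := exists_gis haJ
        exact ⟨b ⊓ c, ⟨mem_of_le inf_le_left hbI, mem_of_le inf_le_right hcJ⟩,
          gis_wellInside_inf_right hab hac⟩ }

instance : Top (RoundedIdeal L) where
  top :=
    { carrier := Set.univ
      bot_mem' := trivial
      isLowerSet' := isLowerSet_univ
      sup_mem' := fun _ _ _ _ => trivial
      exists_gis' := fun a _ => ⟨⊤, trivial, gis_wellInside_top_right a⟩ }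

instance : Bot (RoundedIdeal L) where
  bot :=
    { carrier := {⊥}
      bot_mem' := rfl
      isLowerSet' := fun _ _ hab hb => le_bot_iff.mp (hab.trans hb.le)
      sup_mem' := by rintro _ _ rfl rfl; exact sup_idem ⊥
      exists_gis' := by rintro _ rfl; exact ⟨⊥, rfl, gis_wellInside_bot_left ⊥⟩ }

theorem mem_top : a ∈ (⊤ : RoundedIdeal L) := trivial

theorem mem_bot : a ∈ (⊥ : RoundedIdeal L) ↔ a = ⊥ := Iff.rfl

instance : CompleteLattice (RoundedIdeal L) where
  __ := completeLatticeOfSup (RoundedIdeal L) isLUB_sSup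
  inf := (· ⊓ ·)
  inf_le_left _ _ _ ha := ha.1
  inf_le_right _ _ _ ha := ha.2
  le_inf _ _ _ hI hJ _ ha := ⟨hI ha, hJ ha⟩
  top := ⊤
  le_top _ _ _ := mem_top
  bot := ⊥
  bot_le I _ ha := (mem_bot.mp ha) ▸ I.bot_mem

instance : Order.Frame (RoundedIdeal L) := by
  refine .ofMinimalAxioms ⟨fun I S a ⟨haI, T, hT, haT⟩ => ?_⟩
  classical
  have ha : a = (T.image (a ⊓ ·)).sup id := by
    rw [Finset.sup_image]
    exact (inf_eq_left.mpr haT).symm.trans (Finset.sup_inf_distrib_left T id a)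
  refine ha ▸ finset_sup_mem fun b hb => ?_
  obtain ⟨t, ht, rfl⟩ := Finset.mem_image.mp hb
  obtain ⟨J, hJ, htJ⟩ := hT t ht
  exact le_iSup₂ (f := fun J (_ : J ∈ S) => I ⊓ J) J hJ
    ⟨mem_of_le inf_le_left haI, mem_of_le inf_le_right htJ⟩

theorem eq_top_of_top_mem (h : ⊤ ∈ I) : I = ⊤ :=
  top_le_iff.mp fun _ _ => mem_of_le le_top h

theorem sup_mem_sup (ha : a ∈ I) (hb : b ∈ J) : a ⊔ b ∈ I ⊔ J :=
  sup_mem (le_sup_left (b := J) ha) (le_sup_right (a := I) hb)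

def gisBelow (a : L) : RoundedIdeal L where
  carrier := {b | b ≺₀ a}
  bot_mem' := gis_wellInside_bot_left a
  isLowerSet' _ _ hbc hc := gis_wellInside_mono hbc hc le_rfl
  sup_mem' _ _ := gis_wellInside_sup_left
  exists_gis' _ hb := (interpolative_gis _ _ hb).imp fun _ => And.symm

theorem gisBelow_le (ha : a ∈ I) : gisBelow a ≤ I :=
  fun _ hb => mem_of_le (gis_le hb).le ha

theorem gisBelow_compl_le_compl (a : L) : gisBelow aᶜ ≤ (gisBelow a)ᶜ :=
  le_compl_iff_disjoint_right.mpr <| disjoint_iff.mpr <| le_bot_iff.mp fun _ ⟨hb, hb'⟩ =>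
    le_bot_iff.mp <| (le_inf (gis_le hb').le (gis_le hb).le).trans (inf_compl_self a).le

theorem wellInside_gisBelow (h : a ≺₀ b) : gisBelow a ≺ gisBelow b := by
  obtain ⟨c, hac, hcb⟩ := interpolative_gis _ _ h
  obtain ⟨d, hcd, hdb⟩ := interpolative_gis _ _ hcb
  refine eq_top_of_top_mem ?_
  rw [← show cᶜ ⊔ d = ⊤ from (gis_le hcd : c ≺ d)]
  exact sup_mem_sup (gisBelow_compl_le_compl a (gis_wellInside_compl hac)) hdb

theorem isRegularFrame : IsRegularFrame (RoundedIdeal L) := by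
  refine fun I => le_antisymm (fun a ha => ?_) (sSup_le fun J hJ => WellInside.le hJ)
  obtain ⟨b, hbI, hab⟩ := exists_gis ha
  obtain ⟨c, hac, hcb⟩ := interpolative_gis _ _ hab
  exact le_sSup (s := {J | J ≺ I}) ((wellInside_gisBelow hcb).mono le_rfl (gisBelow_le hbI)) hac

theorem isCompactFrame : IsCompactFrame (RoundedIdeal L) := by
  intro S hS
  obtain ⟨T, hT, htop⟩ := hS mem_top
  choose F hFS hF using hT
  refine ⟨{J | ∃ t ht, F t ht = J}, ?_, T.finite_toSet.dependent_image F, ?_⟩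
  · rintro _ ⟨t, ht, rfl⟩
    exact hFS t ht
  · refine (eq_top_of_top_mem <| mem_sSup.mpr ⟨T, fun t ht => ?_, htop⟩).ge
    exact ⟨F t ht, ⟨t, ht, rfl⟩, hF t ht⟩

def joinHom : FrameHom (RoundedIdeal L) L where
  toFun I := sSup (I : Set L)
  map_inf' I J := by
    refine le_antisymm (sSup_le fun a ha => le_inf (le_sSup ha.1) (le_sSup ha.2)) ?_
    rw [sSup_inf_sSup]
    exact iSup₂_le fun p hp => le_sSup ⟨mem_of_le inf_le_left hp.1, mem_of_le inf_le_right hp.2⟩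
  map_top' := sSup_univ
  map_sSup' S := by
    refine le_antisymm (sSup_le fun a ⟨T, hT, haT⟩ => haT.trans (Finset.sup_le fun t ht => ?_)) ?_
    · obtain ⟨I, hI, htI⟩ := hT t ht
      exact (le_sSup htI).trans (le_sSup ⟨I, hI, rfl⟩)
    · exact sSup_le fun _ ⟨I, hI, hIa⟩ => hIa ▸ sSup_le_sSup (le_sSup hI : I ≤ sSup S)

theorem le_joinHom (ha : a ∈ I) : a ≤ joinHom I := le_sSup ha

theorem eq_bot_of_joinHom_eq_bot (h : joinHom I = ⊥) : I = ⊥ :=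
  le_bot_iff.mp fun _ ha => le_bot_iff.mp (h ▸ le_joinHom ha)

theorem joinHom_gisBelow (hL : ∀ a : L, a = sSup {b | b ≺₀ a}) (a : L) :
    joinHom (gisBelow a) = a :=
  (hL a).symm

end RoundedIdeal

section Lift

variable {K L M : Type*} [Order.Frame K] [Order.Frame L] [Order.Frame M]

theorem FrameHom.eq_of_forall_le (hK : IsRegularFrame K) {g h : FrameHom K M}
    (hle : ∀ x, h x ≤ g x) : h = g := by
  refine DFunLike.ext _ _ fun x => (hle x).antisymm ?_
  calc g x = g (sSup {z | z ≺ x}) := congrArg g (hK x)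
    _ = ⨆ z ∈ {z | z ≺ x}, g z := by rw [map_sSup, sSup_image]
    _ ≤ h x := iSup₂_le fun z (hz : z ≺ x) => calc
      g z = g z ⊓ (h zᶜ ⊔ h x) := by rw [← map_sup, hz, map_top, inf_top_eq]
      _ ≤ g z ⊓ g zᶜ ⊔ h x := by
        rw [inf_sup_left]; exact sup_le_sup (inf_le_inf_left _ (hle _)) inf_le_right
      _ = h x := by rw [← map_inf, inf_compl_self, map_bot, bot_sup_eq]

theorem IsRegularFrame.sSup_eq_sSup_wellInside (hK : IsRegularFrame K) (S : Set K) :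
    sSup S = sSup {w | ∃ x ∈ S, w ≺ x} :=
  le_antisymm (sSup_le fun x hx => (hK x).trans_le (sSup_le_sSup fun _ hw => ⟨x, hx, hw⟩))
    (sSup_le fun _ ⟨_, hx, hw⟩ => hw.le.trans (le_sSup hx))

namespace RoundedIdeal

variable (hK : IsCompactFrame K) (hK' : IsRegularFrame K) (f : FrameHom K L)

def liftIdeal (x : K) : RoundedIdeal L where
  carrier := {a | ∃ z, z ≺ x ∧ a ≤ f z}
  bot_mem' := ⟨⊥, wellInside_bot_left x, bot_le⟩
  isLowerSet' _ _ hab := fun ⟨z, hz, hb⟩ => ⟨z, hz, hab.trans hb⟩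
  sup_mem' _ _ := fun ⟨z₁, h₁, ha⟩ ⟨z₂, h₂, hb⟩ =>
    ⟨z₁ ⊔ z₂, h₁.sup_left h₂, (sup_le_sup ha hb).trans (map_sup f _ _).ge⟩
  exists_gis' a := fun ⟨z, hz, ha⟩ => by
    obtain ⟨w, hzw, hwx⟩ := hz.exists_between hK hK'
    exact ⟨f w, ⟨w, hwx, le_rfl⟩, gis_wellInside_mono ha (hzw.map_gis hK hK' f) le_rfl⟩

theorem mem_liftIdeal {x : K} {a : L} : a ∈ liftIdeal hK hK' f x ↔ ∃ z, z ≺ x ∧ a ≤ f z :=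
  Iff.rfl

theorem liftIdeal_mono : Monotone (liftIdeal hK hK' f) :=
  fun _ _ hxy _ ⟨z, hz, ha⟩ => ⟨z, hz.mono le_rfl hxy, ha⟩

def lift : FrameHom K (RoundedIdeal L) where
  toFun := liftIdeal hK hK' f
  map_inf' x y := by
    refine le_antisymm (le_inf (liftIdeal_mono hK hK' f inf_le_left)
      (liftIdeal_mono hK hK' f inf_le_right)) fun a ⟨⟨z₁, h₁, ha₁⟩, ⟨z₂, h₂, ha₂⟩⟩ => ?_
    exact ⟨z₁ ⊓ z₂, (h₁.mono inf_le_left le_rfl).inf_right (h₂.mono inf_le_right le_rfl),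
      (le_inf ha₁ ha₂).trans (map_inf f _ _).ge⟩
  map_top' := eq_top_of_top_mem ⟨⊤, wellInside_top_right ⊤, (map_top f).ge⟩
  map_sSup' S := by
    refine le_antisymm (fun a ⟨z, hz, haz⟩ => ?_)
      (sSup_le fun _ ⟨x, hx, hxI⟩ => hxI ▸ liftIdeal_mono hK hK' f (le_sSup hx))
    rw [hK'.sSup_eq_sSup_wellInside] at hz
    obtain ⟨T, hTU, hzT⟩ := hz.exists_finset_of_sSup hK
    refine mem_of_le (haz.trans ((OrderHomClass.mono f hzT.le).trans (map_finset_sup f T id).le))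
      (finset_sup_mem fun w hw => ?_)
    obtain ⟨x, hx, hwx⟩ := hTU hw
    have hxS : liftIdeal hK hK' f x ≤ sSup (liftIdeal hK hK' f '' S) := le_sSup ⟨x, hx, rfl⟩
    exact hxS ⟨w, hwx, le_rfl⟩

theorem joinHom_comp_lift : joinHom.comp (lift hK hK' f) = f := by
  refine DFunLike.ext _ _ fun x => le_antisymm
    (sSup_le fun a ⟨z, hz, ha⟩ => ha.trans (OrderHomClass.mono f hz.le)) ?_
  calc f x = f (sSup {z | z ≺ x}) := congrArg f (hK' x)
    _ = ⨆ z ∈ {z | z ≺ x}, f z := by rw [map_sSup, sSup_image]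
    _ ≤ joinHom (lift hK hK' f x) := iSup₂_le fun z hz => le_joinHom ⟨z, hz, le_rfl⟩

theorem eq_lift_of_joinHom_comp {h : FrameHom K (RoundedIdeal L)} (hf : joinHom.comp h = f) :
    h = lift hK hK' f := by
  refine FrameHom.eq_of_forall_le hK' fun x => ?_
  calc h x = h (sSup {z | z ≺ x}) := congrArg h (hK' x)
    _ = ⨆ z ∈ {z | z ≺ x}, h z := by rw [map_sSup, sSup_image]
    _ ≤ lift hK hK' f x := iSup₂_le fun z hz _ hb =>
      (mem_liftIdeal hK hK' f).mpr ⟨z, hz, (le_joinHom hb).trans_eq (DFunLike.congr_fun hf z)⟩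

end RoundedIdeal

end Lift

/-- Theorem 4.11 of the paper: a strongly regular frame `L` has a compactification
through which every member of a given family of frame homomorphisms with compact
regular domains (as frame homomorphisms into `L`) factors uniquely. -/
theorem stronglyRegular_compactification_extension
    {L : Type u} [Order.Frame L]
    (hL : ∀ a : L, a = sSup {b | gis WellInside b a})
    {ι : Type u} (Lf : ι → Type u) [∀ i, Order.Frame (Lf i)]
    (hc : ∀ i, IsCompactFrame (Lf i)) (hr : ∀ i, IsRegularFrame (Lf i))
    (f : ∀ i, FrameHom (Lf i) L) :
    ∃ (M : Type u) (_ : Order.Frame M), IsCompactFrame M ∧ IsRegularFrame M ∧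
      ∃ k : FrameHom M L,
        (∀ a : M, k a = ⊥ → a = ⊥) ∧ Function.Surjective k ∧
        ∀ i, ∃! g : FrameHom (Lf i) M, f i = k.comp g := by
  refine ⟨RoundedIdeal L, inferInstance, RoundedIdeal.isCompactFrame,
    RoundedIdeal.isRegularFrame, RoundedIdeal.joinHom,
    fun _ => RoundedIdeal.eq_bot_of_joinHom_eq_bot,
    fun a => ⟨RoundedIdeal.gisBelow a, RoundedIdeal.joinHom_gisBelow hL a⟩, fun i => ?_⟩
  exact ⟨RoundedIdeal.lift (hc i) (hr i) (f i),
    (RoundedIdeal.joinHom_comp_lift (hc i) (hr i) (f i)).symm,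
    fun g hg => RoundedIdeal.eq_lift_of_joinHom_comp (hc i) (hr i) (f i) hg.symm⟩
end
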